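/- arXiv:math/0105100 — 2 statements merged into one kernel-verified Lean document; each statement's English description precedes it below -/
import Mathlib

section
/- For every natural number n ≥ 1, ∑_{l=0}^{n} ((−1)^l/(l+1)) · C(n+1, l+1) · (2^{l+1} − 1) = ∑_{l=1}^{n+1} (−1)^{l+1}/l. (This is the additional term in the height of the odd-dimensional quadric coming from the summand E_2 = O(1) of the tangent bundle, computed with degree d = 2.) -/
/-!
Write `F_x(m) = ∑_{k=1}^m (-1)^(k-1) C(m,k) x^k / k`, so the left-hand side is `F_2(n+1) - F_1(n+1)`.
Pascal's rule together with `C(m,k-1)/k = C(m+1,k)/(m+1)` and the binomial theorem give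
`F_x(m+1) - F_x(m) = (1 - (1-x)^(m+1)) / (m+1)`. For `x = 2` and `x = 1` these increments differ
by `(-1)^m / (m+1)`, which telescopes to the alternating harmonic sum.
-/

open Finset

theorem sum_range_neg_one_pow_mul_choose_succ_mul_pow {R : Type*} [CommRing R] (m : ℕ) (x : R) :
    ∑ l ∈ range m, (-1 : R) ^ l * m.choose (l + 1) * x ^ (l + 1) = 1 - (1 - x) ^ m := by
  rw [← neg_add_eq_sub x 1, add_pow, sum_range_succ']
  simp only [one_pow, mul_one, pow_zero, Nat.choose_zero_right, Nat.cast_one, neg_pow x,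
    pow_succ (-1 : R), sub_add_cancel_right, ← sum_neg_distrib]
  exact sum_congr rfl fun l _ => by ring

section

variable {K : Type*} [Field K] [CharZero K]

theorem cast_choose_div_add_one (m l : ℕ) :
    (m.choose l : K) / (l + 1) = ((m + 1).choose (l + 1) : K) / (m + 1) := by
  rw [div_eq_div_iff (Nat.cast_add_one_ne_zero l) (Nat.cast_add_one_ne_zero m)]
  exact_mod_cast (Nat.add_one_mul_choose_eq m l).symm.trans (mul_comm _ _) |>.symm

/-- Equals `∫₀ˣ (1 - (1 - t)^m) / t dt`. -/
def alternatingChooseSum (x : K) (m : ℕ) : K :=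
  ∑ l ∈ range m, (-1) ^ l / (l + 1) * m.choose (l + 1) * x ^ (l + 1)

theorem alternatingChooseSum_succ (x : K) (m : ℕ) :
    alternatingChooseSum x (m + 1) =
      alternatingChooseSum x m + (1 - (1 - x) ^ (m + 1)) / (m + 1) := by
  have pascal : alternatingChooseSum x (m + 1) =
      ∑ l ∈ range (m + 1), (-1) ^ l / (l + 1) * m.choose (l + 1) * x ^ (l + 1) +
        ∑ l ∈ range (m + 1), (-1) ^ l / (l + 1) * m.choose l * x ^ (l + 1) := by
    rw [alternatingChooseSum, ← sum_add_distrib]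
    refine sum_congr rfl fun l _ => ?_
    rw [Nat.choose_succ_succ', Nat.cast_add]
    ring
  have top_vanishes : ∑ l ∈ range (m + 1), (-1) ^ l / (l + 1) * m.choose (l + 1) * x ^ (l + 1) =
      alternatingChooseSum x m := by
    rw [sum_range_succ, Nat.choose_succ_self, Nat.cast_zero, mul_zero, zero_mul, add_zero,
      alternatingChooseSum]
  have absorb : ∑ l ∈ range (m + 1), (-1) ^ l / (l + 1) * m.choose l * x ^ (l + 1) =
      (1 - (1 - x) ^ (m + 1)) / (m + 1) := by
    rw [← sum_range_neg_one_pow_mul_choose_succ_mul_pow, sum_div]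
    refine sum_congr rfl fun l _ => ?_
    linear_combination (-1) ^ l * x ^ (l + 1) * cast_choose_div_add_one (K := K) m l
  rw [pascal, top_vanishes, absorb]

theorem alternatingChooseSum_eq_sum_range (x : K) (m : ℕ) :
    alternatingChooseSum x m = ∑ j ∈ range m, (1 - (1 - x) ^ (j + 1)) / (j + 1) := by
  induction m with
  | zero => simp [alternatingChooseSum]
  | succ m ih => rw [alternatingChooseSum_succ, ih, sum_range_succ]

end

theorem odd_quadric_extra_term_general (n : ℕ) :
    ∑ l ∈ Finset.range (n + 1),
        ((-1 : ℚ) ^ l / (l + 1)) * ((n + 1).choose (l + 1)) * (2 ^ (l + 1) - 1)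
      = ∑ l ∈ Finset.Icc 1 (n + 1), (-1 : ℚ) ^ (l + 1) / l := by
  have difference : ∑ l ∈ range (n + 1),
        ((-1 : ℚ) ^ l / (l + 1)) * ((n + 1).choose (l + 1)) * (2 ^ (l + 1) - 1)
      = alternatingChooseSum 2 (n + 1) - alternatingChooseSum 1 (n + 1) := by
    simp only [alternatingChooseSum, one_pow, ← sum_sub_distrib, mul_sub, mul_one]
  rw [difference, alternatingChooseSum_eq_sum_range, alternatingChooseSum_eq_sum_range,
    ← sum_sub_distrib, ← Ico_add_one_right_eq_Icc, sum_Ico_eq_sum_range, add_tsub_cancel_right]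
  refine sum_congr rfl fun j _ => ?_
  push_cast
  ring

/-- For `n ≥ 1`,
`∑_{l=0}^n ((-1)^l/(l+1)) C(n+1,l+1) (2^{l+1} - 1) = ∑_{l=1}^{n+1} (-1)^{l+1}/l`
as rational numbers. -/
theorem odd_quadric_extra_term (n : ℕ) (hn : 1 ≤ n) :
    ∑ l ∈ Finset.range (n + 1),
        ((-1 : ℚ) ^ l / (l + 1)) * ((n + 1).choose (l + 1)) * (2 ^ (l + 1) - 1)
      = ∑ l ∈ Finset.Icc 1 (n + 1), (-1 : ℚ) ^ (l + 1) / l :=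
  odd_quadric_extra_term_general n
end

section
/- For every natural number m ≥ 1, ∑_{l=2}^{2m} (4m + 1 + (−1)^l)/(2l) + ∑_{l=1}^{2m} (−1)^{l+1}/l = (2m+1)·∑_{k=1}^{2m−1} 1/k − (1/2)·∑_{k=1}^{m−1} 1/k − 2m + 1. (This computes the height of the odd-dimensional smooth quadric Q_{2m−1}: the hypersurface height identity with d = 2, n = 2m−1, plus the extra alternating-harmonic term coming from E_2 = O(1).) -/
/-!
Everything reduces to harmonic numbers `H_n`. The alternating sum up to `2n` is `H_{2n} - H_n`
(the even terms, counted twice, form `H_n`), and `(c + (-1)^l)/(2l)` is `c/2 · 1/l` minus half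
the alternating term. With `c = 4m + 1` the left side becomes `(2m+1) H_{2m} - H_m/2 - 2m`, and
`H_{2m} = H_{2m-1} + 1/(2m)`, `H_m = H_{m-1} + 1/m` turn this into the right side.
-/

open Finset

lemma sum_Icc_one_div_eq_harmonic (n : ℕ) : ∑ k ∈ Icc 1 n, (1 : ℚ) / k = harmonic n := by
  simp only [harmonic_eq_sum_Icc, one_div]

lemma sum_Icc_neg_one_pow_div_eq_harmonic_sub (n : ℕ) :
    ∑ l ∈ Icc 1 (2 * n), (-1 : ℚ) ^ (l + 1) / l = harmonic (2 * n) - harmonic n := by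
  induction n with
  | zero => simp
  | succ n ih =>
    rw [show 2 * (n + 1) = 2 * n + 1 + 1 by ring, sum_Icc_succ_top (by omega),
      sum_Icc_succ_top (by omega), ih, harmonic_succ, harmonic_succ, harmonic_succ]
    push_cast
    simp only [pow_succ, pow_mul]
    field_simp
    ring

lemma sum_Icc_two_add_neg_one_pow_div (c : ℚ) {N : ℕ} (hN : 1 ≤ N) :
    ∑ l ∈ Icc 2 N, (c + (-1 : ℚ) ^ l) / (2 * l)
      = c / 2 * harmonic N - 1 / 2 * ∑ l ∈ Icc 1 N, (-1 : ℚ) ^ (l + 1) / l - (c - 1) / 2 := by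
  have hsplit := add_sum_Ioc_eq_sum_Icc (f := fun l : ℕ ↦ (c + (-1 : ℚ) ^ l) / (2 * l)) hN
  rw [← Icc_add_one_left_eq_Ioc] at hsplit
  have hterm : ∀ l ∈ Icc 1 N, (c + (-1 : ℚ) ^ l) / (2 * l)
      = c / 2 * (1 / l) - 1 / 2 * ((-1 : ℚ) ^ (l + 1) / l) := by
    intro l _
    rw [pow_succ]
    ring
  rw [sum_congr rfl hterm, sum_sub_distrib, ← mul_sum, ← mul_sum,
    sum_Icc_one_div_eq_harmonic] at hsplit
  norm_num only at hsplit
  linarith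

/-- Height of the odd-dimensional quadric `Q_{2m-1}`: for `m ≥ 1`,
`∑_{l=2}^{2m} (4m+1+(-1)^l)/(2l) + ∑_{l=1}^{2m} (-1)^{l+1}/l
  = (2m+1) ∑_{k=1}^{2m-1} 1/k - (1/2) ∑_{k=1}^{m-1} 1/k - 2m + 1`. -/
theorem odd_quadric_height (m : ℕ) (hm : 1 ≤ m) :
    ∑ l ∈ Finset.Icc 2 (2 * m), (4 * m + 1 + (-1 : ℚ) ^ l) / (2 * l)
      + ∑ l ∈ Finset.Icc 1 (2 * m), (-1 : ℚ) ^ (l + 1) / l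
      = (2 * m + 1) * (∑ k ∈ Finset.Icc 1 (2 * m - 1), (1 : ℚ) / k)
        - (1 / 2) * (∑ k ∈ Finset.Icc 1 (m - 1), (1 : ℚ) / k)
        - 2 * m + 1 := by
  obtain ⟨p, rfl⟩ : ∃ p, m = p + 1 := ⟨m - 1, by omega⟩
  rw [sum_Icc_two_add_neg_one_pow_div _ (by omega), sum_Icc_neg_one_pow_div_eq_harmonic_sub,
    sum_Icc_one_div_eq_harmonic, sum_Icc_one_div_eq_harmonic,
    show 2 * (p + 1) = 2 * p + 1 + 1 by ring, Nat.add_sub_cancel, Nat.add_sub_cancel,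
    harmonic_succ (2 * p + 1), harmonic_succ p]
  push_cast
  field_simp
  ring
end
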